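/- arXiv:1806.08533 — 2 statements merged into one kernel-verified Lean document; each statement's English description precedes it below -/
import Mathlib

section
/- Comparison estimate for classical solutions (used in the proof of Theorem 3.1): Under the standing assumptions, let Φ₁,Φ₂:ℝ→ℝ be continuous with sup_{x∈ℝ}|Φ₁(x)−Φ₂(x)|<∞. For i=1,2 let u_i:[0,T]×ℝ→ℝ be continuous with linear growth (|u_i(t,x)|≤C(1+|x|)), such that ∂ₜu_i, ∂ₓu_i, ∂²ₓu_i exist and are continuous on [0,T)×ℝ with ∂²ₓu_i bounded, u_i(T,·)=Φ_i, ∂ₜu_i(t,x)+F̄(t,x,∂²ₓu_i(t,x))=0 for all (t,x)∈[0,T)×ℝ, and (t,x,∂²ₓu_i(t,x))∈D_{ε_i} for all (t,x)∈[0,T)×ℝ and some ε_i∈(0,ε₀]. Then sup_{(t,x)∈[0,T]×ℝ}|u₁(t,x)−u₂(t,x)| ≤ sup_{x∈ℝ}|Φ₁(x)−Φ₂(x)|. -/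
/-!
Maximum principle with a penalisation. For `η > 0` and `λ = 2C + 1`, the function
`ψ = u₁ - u₂ - η e^{λ(T-t)} (1 + x²)` tends to `-∞` as `|x| → ∞` (linear against quadratic
growth), so if it exceeded `B = sup (Φ₁ - Φ₂)` it would attain its maximum at some `(t₀, x₀)`,
and `t₀ < T` because of the terminal condition. There `∂ₜψ ≤ 0` (a one-sided derivative) and
`∂²ₓψ ≤ 0`, and the equation turns these into
`ηλ e^{λ(T-t₀)}(1 + x₀²) ≤ F̄(z₁) - F̄(z₂) ≤ C (z₁ - z₂)⁺ ≤ 2Cη e^{λ(T-t₀)}`,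
where `zᵢ = ∂²ₓuᵢ(t₀, x₀)` and `C` bounds `∂_z F̄` on a set `D_{ε,1/ε}` containing both
second derivatives; this is impossible. Letting `η → 0` and exchanging the roles of `u₁` and
`u₂` gives the estimate.
-/

open Set Filter

noncomputable section

/-- Second derivative in the space variable of a function of `(t, x)`. -/
def d2x (u : ℝ → ℝ → ℝ) (t x : ℝ) : ℝ := iteratedDeriv 2 (fun y => u t y) x

/-- Data of the abstract market impact model of Section 2. -/
structure Standing where
  /-- the time horizon -/
  T : ℝ
  T_pos : 0 < T
  /-- the threshold `ε₀` -/
  eps0 : ℝ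
  eps0_mem : eps0 ∈ Set.Ioc (0 : ℝ) 1
  /-- the `ℝ ∪ {+∞}`-valued cost function `F` -/
  F : ℝ → ℝ → ℝ → EReal
  /-- the nonlinearity `F̄`, real-valued on the domain `D` -/
  Fbar : ℝ → ℝ → ℝ → ℝ
  /-- the gamma constraint `γ̄`, possibly `+∞` -/
  gammaBar : ℝ → ℝ → EReal
  L0 : ℝ
  M : ℝ
  L0_pos : 0 < L0
  M_pos : 0 < M
  /-- `∂ₜ F̄` -/
  FbarT : ℝ → ℝ → ℝ → ℝ
  /-- `∂ₓ F̄` -/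
  FbarX : ℝ → ℝ → ℝ → ℝ
  /-- `∂_z F̄` -/
  FbarZ : ℝ → ℝ → ℝ → ℝ

namespace Standing

/-- The domain `D = {F < ∞}`. -/
def D (S : Standing) : Set (ℝ × ℝ × ℝ) :=
  {p | p.1 ∈ Set.Icc 0 S.T ∧ S.F p.1 p.2.1 p.2.2 < ⊤}

/-- The set `D_ε = {F ≤ 1/ε}`. -/
def Deps (S : Standing) (ε : ℝ) : Set (ℝ × ℝ × ℝ) :=
  {p | p.1 ∈ Set.Icc 0 S.T ∧ S.F p.1 p.2.1 p.2.2 ≤ ((1 / ε : ℝ) : EReal)}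

/-- The set `D_{ε,k}`. -/
def DepsK (S : Standing) (ε k : ℝ) : Set (ℝ × ℝ × ℝ) :=
  S.Deps ε ∩ {p | |p.2.2| ≤ k}

/-- The standing assumptions on the abstract model. -/
structure Hyp (S : Standing) : Prop where
  /-- `F` is continuous (with values in `ℝ ∪ {+∞}`). -/
  F_cont : Continuous fun p : ℝ × ℝ × ℝ => S.F p.1 p.2.1 p.2.2
  /-- the domain of `F` is `{z < γ̄(t,x)}`. -/
  domain_eq : ∀ p : ℝ × ℝ × ℝ, p.1 ∈ Set.Icc 0 S.T →
      (S.F p.1 p.2.1 p.2.2 < ⊤ ↔ ((p.2.2 : ℝ) : EReal) < S.gammaBar p.1 p.2.1)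
  /-- `γ̄` is either identically `+∞` or real-valued and uniformly continuous. -/
  gamma_cases :
      (∀ t x, S.gammaBar t x = ⊤) ∨
      (∃ g : ℝ → ℝ → ℝ, (∀ t x, S.gammaBar t x = ((g t x : ℝ) : EReal)) ∧
        UniformContinuousOn (fun p : ℝ × ℝ => g p.1 p.2) (Set.Icc 0 S.T ×ˢ Set.univ))
  /-- `F̄` is continuous on `D`. -/
  Fbar_cont : ContinuousOn (fun p : ℝ × ℝ × ℝ => S.Fbar p.1 p.2.1 p.2.2) S.D
  /-- (R1) `F̄` is `C¹` on `D`: existence of the partial derivatives. -/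
  Fbar_dT : ∀ p ∈ S.D,
      HasDerivWithinAt (fun s => S.Fbar s p.2.1 p.2.2) (S.FbarT p.1 p.2.1 p.2.2)
        (Set.Icc 0 S.T) p.1
  Fbar_dX : ∀ p ∈ S.D,
      HasDerivAt (fun y => S.Fbar p.1 y p.2.2) (S.FbarX p.1 p.2.1 p.2.2) p.2.1
  Fbar_dZ : ∀ p ∈ S.D,
      HasDerivAt (fun w => S.Fbar p.1 p.2.1 w) (S.FbarZ p.1 p.2.1 p.2.2) p.2.2
  /-- (R1) continuity of the partial derivatives on `D`. -/
  FbarT_cont : ContinuousOn (fun p : ℝ × ℝ × ℝ => S.FbarT p.1 p.2.1 p.2.2) S.D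
  FbarX_cont : ContinuousOn (fun p : ℝ × ℝ × ℝ => S.FbarX p.1 p.2.1 p.2.2) S.D
  FbarZ_cont : ContinuousOn (fun p : ℝ × ℝ × ℝ => S.FbarZ p.1 p.2.1 p.2.2) S.D
  /-- (R1) partial derivatives of order `1` in `t`, up to `3` in `x` and in `z`,
  are bounded on `D_{ε,1/ε}`. -/
  derivs_bdd : ∀ ε ∈ Set.Ioc (0 : ℝ) S.eps0, ∃ C : ℝ,
      ∀ p ∈ S.DepsK ε (1 / ε), ∀ n : ℕ, 1 ≤ n → n ≤ 3 →
        |iteratedDeriv n (fun y => S.Fbar p.1 y p.2.2) p.2.1| ≤ C ∧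
        |iteratedDeriv n (fun w => S.Fbar p.1 p.2.1 w) p.2.2| ≤ C ∧
        |S.FbarT p.1 p.2.1 p.2.2| ≤ C
  /-- (R1) `F̄` is uniformly continuous on `D_ε`. -/
  Fbar_unifCont : ∀ ε ∈ Set.Ioc (0 : ℝ) S.eps0,
      UniformContinuousOn (fun p : ℝ × ℝ × ℝ => S.Fbar p.1 p.2.1 p.2.2) (S.Deps ε)
  /-- (R2) `F(t,x,0) = 0` and `F̄(t,x,0) = 0`. -/
  F_zero : ∀ t ∈ Set.Icc (0 : ℝ) S.T, ∀ x : ℝ, S.F t x 0 = 0 ∧ S.Fbar t x 0 = 0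
  /-- (R3) `|∂ₜF̄| ≤ L₀ |F̄|` on `D`. -/
  FbarT_bdd : ∀ p ∈ S.D,
      |S.FbarT p.1 p.2.1 p.2.2| ≤ S.L0 * |S.Fbar p.1 p.2.1 p.2.2|
  /-- (R3) `|∂²ₓF̄(t,x,z)| ≤ M |z|` on `D`. -/
  Fbarxx_bdd : ∀ p ∈ S.D,
      |iteratedDeriv 2 (fun y => S.Fbar p.1 y p.2.2) p.2.1| ≤ S.M * |p.2.2|
  /-- (R4) `∂_z F̄ > 0` on `D_ε`. -/
  FbarZ_pos : ∀ ε ∈ Set.Ioc (0 : ℝ) S.eps0, ∀ p ∈ S.Deps ε,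
      0 < S.FbarZ p.1 p.2.1 p.2.2
  /-- (R4) `∂_z F̄` and `1/∂_z F̄` are bounded on `D_{ε,1/ε}`. -/
  FbarZ_bdd : ∀ ε ∈ Set.Ioc (0 : ℝ) S.eps0, ∃ C > (0 : ℝ),
      ∀ p ∈ S.DepsK ε (1 / ε),
        S.FbarZ p.1 p.2.1 p.2.2 ≤ C ∧ 1 / C ≤ S.FbarZ p.1 p.2.1 p.2.2
  /-- (R5) `F` is uniformly continuous on `D_ε`. -/
  F_unifCont : ∀ ε ∈ Set.Ioc (0 : ℝ) S.eps0,
      UniformContinuousOn (fun p : ℝ × ℝ × ℝ => (S.F p.1 p.2.1 p.2.2).toReal) (S.Deps ε)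
  /-- (R5) `D_ε = {z ≤ γ̄_ε(t,x)}` for a continuous `γ̄_ε`. -/
  Deps_eq : ∀ ε ∈ Set.Ioc (0 : ℝ) S.eps0, ∃ γε : ℝ → ℝ → ℝ,
      Continuous (fun p : ℝ × ℝ => γε p.1 p.2) ∧
      S.Deps ε = {p : ℝ × ℝ × ℝ | p.1 ∈ Set.Icc 0 S.T ∧ p.2.2 ≤ γε p.1 p.2.1}

/-- The solution hypotheses of Proposition 3.6: `Φ` is a `C²` terminal condition with
`|Φ''| ≤ K_Φ` and `(T,·,Φ'') ∈ D_{ε_Φ}`, and `u` is a classical `C^{1,4}` solution of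
`∂ₜu + F̄(·,∂²ₓu) = 0` on `[0,T) × ℝ` with `u(T,·) = Φ`, `|∂²ₓu| ≤ K'` and
`(·,∂²ₓu) ∈ D_{ε'}`. -/
structure SolHyp (S : Standing) (KΦ εΦ : ℝ) (Φ : ℝ → ℝ) (K' ε' : ℝ)
    (u : ℝ → ℝ → ℝ) : Prop where
  KPhi_pos : 0 < KΦ
  epsPhi_mem : εΦ ∈ Set.Ioc (0 : ℝ) S.eps0
  Phi_C2 : ContDiff ℝ 2 Φ
  Phi_xx_bdd : ∀ x, |iteratedDeriv 2 Φ x| ≤ KΦ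
  Phi_dom : ∀ x, (S.T, x, iteratedDeriv 2 Φ x) ∈ S.Deps εΦ
  K'_pos : 0 < K'
  eps'_mem : ε' ∈ Set.Ioc (0 : ℝ) S.eps0
  u_cont : ContinuousOn (fun p : ℝ × ℝ => u p.1 p.2) (Set.Icc 0 S.T ×ˢ Set.univ)
  u_C4x : ∀ t ∈ Set.Ico (0 : ℝ) S.T, ContDiff ℝ 4 fun y => u t y
  u_derivs_cont : ∀ n : ℕ, n ≤ 4 → ContinuousOn
      (fun p : ℝ × ℝ => iteratedDeriv n (fun y => u p.1 y) p.2)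
      (Set.Ico 0 S.T ×ˢ Set.univ)
  u_C2x_T : ContDiff ℝ 2 fun y => u S.T y
  u_derivs2_cont : ∀ n : ℕ, n ≤ 2 → ContinuousOn
      (fun p : ℝ × ℝ => iteratedDeriv n (fun y => u p.1 y) p.2)
      (Set.Icc 0 S.T ×ˢ Set.univ)
  uxx_bdd : ∀ t ∈ Set.Icc (0 : ℝ) S.T, ∀ x, |d2x u t x| ≤ K'
  u_dom : ∀ t ∈ Set.Icc (0 : ℝ) S.T, ∀ x, (t, x, d2x u t x) ∈ S.Deps ε'
  pde : ∀ t ∈ Set.Ico (0 : ℝ) S.T, ∀ x,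
      HasDerivWithinAt (fun s => u s x) (-(S.Fbar t x (d2x u t x))) (Set.Ico 0 S.T) t
  terminal : ∀ x, u S.T x = Φ x

end Standing

namespace Standing

/-- A classical solution of `∂ₜu + F̄(·,∂²ₓu) = 0` on `[0,T) × ℝ` with terminal condition
`Φ`: continuous with linear growth on `[0,T] × ℝ`, `C^{1,2}` on `[0,T) × ℝ` with bounded
`∂²ₓu`, and `(·,∂²ₓu) ∈ D_{ε_i}` for some `ε_i ∈ (0,ε₀]`. -/
structure ClassicalSol (S : Standing) (Φ : ℝ → ℝ) (u : ℝ → ℝ → ℝ) : Prop where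
  cont : ContinuousOn (fun p : ℝ × ℝ => u p.1 p.2) (Set.Icc 0 S.T ×ˢ Set.univ)
  growth : ∃ C : ℝ, ∀ t ∈ Set.Icc (0 : ℝ) S.T, ∀ x : ℝ, |u t x| ≤ C * (1 + |x|)
  C2x : ∀ t ∈ Set.Ico (0 : ℝ) S.T, ContDiff ℝ 2 fun y => u t y
  derivs_cont : ∀ n : ℕ, n ≤ 2 → ContinuousOn
      (fun p : ℝ × ℝ => iteratedDeriv n (fun y => u p.1 y) p.2)
      (Set.Ico 0 S.T ×ˢ Set.univ)
  xx_bdd : ∃ K : ℝ, ∀ t ∈ Set.Ico (0 : ℝ) S.T, ∀ x : ℝ, |d2x u t x| ≤ K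
  dom : ∃ εi ∈ Set.Ioc (0 : ℝ) S.eps0,
      ∀ t ∈ Set.Ico (0 : ℝ) S.T, ∀ x : ℝ, (t, x, d2x u t x) ∈ S.Deps εi
  pde : ∀ t ∈ Set.Ico (0 : ℝ) S.T, ∀ x : ℝ,
      HasDerivWithinAt (fun s => u s x) (-(S.Fbar t x (d2x u t x))) (Set.Ico 0 S.T) t
  terminal : ∀ x : ℝ, u S.T x = Φ x

end Standing

open Topology

lemma IsLocalMaxOn.hasDerivWithinAt_nonpos {f : ℝ → ℝ} {s : Set ℝ} {a d : ℝ}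
    (h : IsLocalMaxOn f s a) (hf : HasDerivWithinAt f d s a) (hs : ∃ᶠ x in 𝓝[>] a, x ∈ s) :
    d ≤ 0 := by
  simpa using h.hasFDerivWithinAt_nonpos hf.hasFDerivWithinAt
    (one_mem_posTangentConeAt_iff_frequently.2 hs)

lemma IsLocalMax.iteratedDeriv_two_nonpos {f : ℝ → ℝ} {a : ℝ} (h : IsLocalMax f a)
    (hc : ContinuousAt f a) : iteratedDeriv 2 f a ≤ 0 := by
  by_contra! hpos
  have hmin : IsLocalMin f a := by
    rw [iteratedDeriv_succ, iteratedDeriv_one] at hpos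
    exact isLocalMin_of_deriv_deriv_pos hpos h.deriv_eq_zero hc
  -- being both a local maximum and a local minimum, `a` has a neighbourhood where `f` is constant
  have hflat : f =ᶠ[𝓝 a] fun _ => f a := by
    filter_upwards [h, hmin] with x hmax hmin' using le_antisymm hmax hmin'
  rw [hflat.iteratedDeriv_eq, iteratedDeriv_const] at hpos
  simp at hpos

lemma sub_le_mul_max_sub_zero {g g' : ℝ → ℝ} {s : Set ℝ} (hs : s.OrdConnected) {C : ℝ}
    (hg : ∀ w ∈ s, HasDerivAt g (g' w) w) (hpos : ∀ w ∈ s, 0 ≤ g' w)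
    (hC : ∀ w ∈ s, g' w ≤ C) {z₁ z₂ : ℝ} (hz₁ : z₁ ∈ s) (hz₂ : z₂ ∈ s) :
    g z₁ - g z₂ ≤ C * max (z₁ - z₂) 0 := by
  have hdiff : DifferentiableOn ℝ g s :=
    fun w hw => (hg w hw).differentiableAt.differentiableWithinAt
  have hderiv : ∀ w ∈ interior s, deriv g w = g' w :=
    fun w hw => (hg w (interior_subset hw)).deriv
  rcases le_total z₂ z₁ with h | h
  · rw [max_eq_left (sub_nonneg.2 h)]
    exact hs.convex.image_sub_le_mul_sub_of_deriv_le hdiff.continuousOn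
      (hdiff.mono interior_subset)
      (fun w hw => (hderiv w hw).trans_le (hC w (interior_subset hw))) z₂ hz₂ z₁ hz₁ h
  · rw [max_eq_right (sub_nonpos.2 h), mul_zero, sub_nonpos]
    exact monotoneOn_of_deriv_nonneg hs.convex hdiff.continuousOn (hdiff.mono interior_subset)
      (fun w hw => (hderiv w hw).symm ▸ hpos w (interior_subset hw)) hz₁ hz₂ h

lemma exists_mul_one_add_abs_le_mul_one_add_sq (c : ℝ) {η : ℝ} (hη : 0 < η) :
    ∃ R, ∀ x : ℝ, R ≤ |x| → c * (1 + |x|) ≤ η * (1 + x ^ 2) := by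
  refine ⟨1 + 2 * |c| / η, fun x hx => ?_⟩
  have hx1 : 1 ≤ |x| := le_trans (le_add_of_nonneg_right (by positivity)) hx
  have hcx : 2 * |c| ≤ η * |x| := by
    rw [← div_le_iff₀' hη]; linarith
  calc c * (1 + |x|) ≤ |c| * (1 + |x|) := by gcongr; exact le_abs_self c
    _ ≤ 2 * |c| * |x| := by nlinarith [abs_nonneg c]
    _ ≤ η * |x| * |x| := by gcongr
    _ ≤ η * (1 + x ^ 2) := by nlinarith [sq_abs x]

lemma ContinuousOn.exists_isMaxOn_Icc_prod_univ {ψ : ℝ × ℝ → ℝ} {a b R c : ℝ}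
    (hψ : ContinuousOn ψ (Icc a b ×ˢ univ))
    (hfar : ∀ t ∈ Icc a b, ∀ x, R ≤ |x| → ψ (t, x) ≤ c)
    {p₁ : ℝ × ℝ} (hp₁ : p₁ ∈ Icc a b ×ˢ univ) (hc : c ≤ ψ p₁) :
    ∃ p₀ ∈ Icc a b ×ˢ univ, IsMaxOn ψ (Icc a b ×ˢ univ) p₀ := by
  refine hψ.exists_isMaxOn' (isClosed_Icc.prod isClosed_univ) hp₁ ?_
  rw [eventually_inf_principal]
  refine mem_cocompact.2 ⟨Icc a b ×ˢ Icc (-R) R, isCompact_Icc.prod isCompact_Icc, ?_⟩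
  rintro ⟨t, x⟩ hK ⟨ht, -⟩
  have hx : x ∉ Icc (-R) R := fun hx => hK ⟨ht, hx⟩
  rw [mem_Icc, ← abs_le, not_le] at hx
  exact (hfar t ht x hx.le).trans hc

def barrier (lam T t x : ℝ) : ℝ := Real.exp (lam * (T - t)) * (1 + x ^ 2)

lemma continuous_barrier (lam T : ℝ) :
    Continuous fun p : ℝ × ℝ => barrier lam T p.1 p.2 := by
  unfold barrier; fun_prop

lemma contDiff_barrier (lam T t : ℝ) : ContDiff ℝ 2 (barrier lam T t) := by
  unfold barrier; fun_prop

lemma hasDerivAt_barrier (lam T t x : ℝ) :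
    HasDerivAt (fun s => barrier lam T s x) (-(lam * barrier lam T t x)) t := by
  refine ((((hasDerivAt_id t).const_sub T).const_mul lam).exp.mul_const _).congr_deriv ?_
  simp only [barrier, id]
  ring

lemma iteratedDeriv_two_barrier (lam T t x : ℝ) :
    iteratedDeriv 2 (barrier lam T t) x = 2 * Real.exp (lam * (T - t)) := by
  rw [show barrier lam T t = fun y => Real.exp (lam * (T - t)) * (1 + y ^ 2) from rfl,
    iteratedDeriv_const_mul_field, iteratedDeriv_const_add two_pos, iteratedDeriv_pow]
  norm_num [Nat.descFactorial, mul_comm]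

lemma exp_le_barrier (lam T t x : ℝ) : Real.exp (lam * (T - t)) ≤ barrier lam T t x :=
  le_mul_of_one_le_right (Real.exp_pos _).le (by nlinarith [sq_nonneg x])

lemma one_add_sq_le_barrier {lam T t : ℝ} (hlam : 0 ≤ lam) (ht : t ≤ T) (x : ℝ) :
    1 + x ^ 2 ≤ barrier lam T t x :=
  le_mul_of_one_le_left (by positivity) (Real.one_le_exp (by nlinarith))

namespace Standing

variable {S : Standing}

lemma Deps_anti {ε ε' : ℝ} (hε : 0 < ε) (h : ε ≤ ε') : S.Deps ε' ⊆ S.Deps ε :=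
  fun _ hp => ⟨hp.1, hp.2.trans (EReal.coe_le_coe_iff.2 (one_div_le_one_div_of_le hε h))⟩

lemma Deps_subset_D (ε : ℝ) : S.Deps ε ⊆ S.D :=
  fun _ hp => ⟨hp.1, hp.2.trans_lt (EReal.coe_lt_top _)⟩

lemma Hyp.ordConnected_DepsK (hS : S.Hyp) {ε : ℝ} (hε : ε ∈ Ioc 0 S.eps0) (k t x : ℝ) :
    {w | (t, x, w) ∈ S.DepsK ε k}.OrdConnected := by
  obtain ⟨γ, -, hγ⟩ := hS.Deps_eq ε hε
  refine ⟨fun z₁ hz₁ z₂ hz₂ w hw => ?_⟩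
  simp only [DepsK, hγ, mem_ofPred_eq, mem_inter_iff, abs_le] at hz₁ hz₂ ⊢
  exact ⟨⟨hz₂.1.1, hw.2.trans hz₂.1.2⟩, by linarith [hw.1], by linarith [hw.2]⟩

lemma Hyp.exists_Fbar_sub_le (hS : S.Hyp) {ε : ℝ} (hε : ε ∈ Ioc 0 S.eps0) :
    ∃ C > 0, ∀ t x z₁ z₂ : ℝ, (t, x, z₁) ∈ S.DepsK ε (1 / ε) →
      (t, x, z₂) ∈ S.DepsK ε (1 / ε) → S.Fbar t x z₁ - S.Fbar t x z₂ ≤ C * max (z₁ - z₂) 0 := by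
  obtain ⟨C, hC, hbdd⟩ := hS.FbarZ_bdd ε hε
  refine ⟨C, hC, fun t x z₁ z₂ hz₁ hz₂ => ?_⟩
  exact sub_le_mul_max_sub_zero (g' := S.FbarZ t x) (hS.ordConnected_DepsK hε _ t x)
    (fun w hw => hS.Fbar_dZ _ (Deps_subset_D ε hw.1))
    (fun w hw => (hS.FbarZ_pos ε hε _ hw.1).le) (fun w hw => (hbdd _ hw).1) hz₁ hz₂

lemma ClassicalSol.eventually_mem_DepsK {Φ : ℝ → ℝ} {u : ℝ → ℝ → ℝ}
    (h : S.ClassicalSol Φ u) :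
    ∀ᶠ ε in 𝓝[>] 0, ∀ t ∈ Ico 0 S.T, ∀ x, (t, x, d2x u t x) ∈ S.DepsK ε (1 / ε) := by
  obtain ⟨K, hK⟩ := h.xx_bdd
  obtain ⟨ε₁, hε₁, hdom⟩ := h.dom
  filter_upwards [Ioo_mem_nhdsGT (lt_min hε₁.1 (by positivity : (0 : ℝ) < 1 / (|K| + 1)))]
    with ε hε t ht x
  refine ⟨Deps_anti hε.1 (hε.2.le.trans (min_le_left _ _)) (hdom t ht x), ?_⟩
  have : |K| + 1 ≤ 1 / ε := by
    rw [le_div_iff₀ hε.1, ← le_div_iff₀' (by positivity)]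
    exact hε.2.le.trans (min_le_right _ _)
  exact (hK t ht x).trans ((le_abs_self K).trans (by linarith))

def OneSidedLipschitzAlong (S : Standing) (C : ℝ) (u₁ u₂ : ℝ → ℝ → ℝ) : Prop :=
  ∀ t ∈ Ico 0 S.T, ∀ x, S.Fbar t x (d2x u₁ t x) - S.Fbar t x (d2x u₂ t x) ≤
    C * max (d2x u₁ t x - d2x u₂ t x) 0

end Standing

namespace Standing.ClassicalSol

variable {S : Standing} {Φ₁ Φ₂ : ℝ → ℝ} {u₁ u₂ : ℝ → ℝ → ℝ} {C : ℝ}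

lemma not_isMaxOn_sub_sub_barrier (h₁ : S.ClassicalSol Φ₁ u₁) (h₂ : S.ClassicalSol Φ₂ u₂)
    (hC : 0 ≤ C) (hF : S.OneSidedLipschitzAlong C u₁ u₂) {η : ℝ} (hη : 0 < η) {t₀ x₀ : ℝ}
    (ht₀ : t₀ ∈ Ico 0 S.T) :
    ¬ IsMaxOn (fun p : ℝ × ℝ => u₁ p.1 p.2 - u₂ p.1 p.2 - η * barrier (2 * C + 1) S.T p.1 p.2)
      (Icc 0 S.T ×ˢ univ) (t₀, x₀) := by
  intro hmax
  set lam := 2 * C + 1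
  set e := Real.exp (lam * (S.T - t₀))
  have htime : η * (lam * barrier lam S.T t₀ x₀) ≤
      S.Fbar t₀ x₀ (d2x u₁ t₀ x₀) - S.Fbar t₀ x₀ (d2x u₂ t₀ x₀) := by
    have hderiv := ((h₁.pde t₀ ht₀ x₀).sub (h₂.pde t₀ ht₀ x₀)).sub
      ((hasDerivAt_barrier lam S.T t₀ x₀).hasDerivWithinAt.const_mul η)
    have hmax_t : IsMaxOn (fun s => u₁ s x₀ - u₂ s x₀ - η * barrier lam S.T s x₀)
        (Ico 0 S.T) t₀ :=
      fun s hs => hmax (mk_mem_prod (Ico_subset_Icc_self hs) (mem_univ x₀))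
    have := hmax_t.localize.hasDerivWithinAt_nonpos hderiv
      ((Filter.Eventually.frequently (Ioo_mem_nhdsGT ht₀.2)).mono
        fun s hs => ⟨ht₀.1.trans hs.1.le, hs.2⟩)
    linarith
  have hspace : d2x u₁ t₀ x₀ - d2x u₂ t₀ x₀ - η * (2 * e) ≤ 0 := by
    have hc₁ := h₁.C2x t₀ ht₀
    have hc₂ := h₂.C2x t₀ ht₀
    have hc₃ := (contDiff_barrier lam S.T t₀).const_smul η
    have hmax_x : IsLocalMax
        ((fun y => u₁ t₀ y) - (fun y => u₂ t₀ y) - η • barrier lam S.T t₀) x₀ :=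
      IsMaxOn.isLocalMax (fun y _ => hmax (mk_mem_prod (Ico_subset_Icc_self ht₀) (mem_univ y)))
        univ_mem
    have := hmax_x.iteratedDeriv_two_nonpos ((hc₁.sub hc₂).sub hc₃).continuous.continuousAt
    rwa [iteratedDeriv_sub (f := (fun y => u₁ t₀ y) - fun y => u₂ t₀ y)
        (g := η • barrier lam S.T t₀) (hc₁.sub hc₂).contDiffAt hc₃.contDiffAt,
      iteratedDeriv_sub hc₁.contDiffAt hc₂.contDiffAt, iteratedDeriv_const_smul_field,
      iteratedDeriv_two_barrier, smul_eq_mul] at this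
  have he : 0 < e := Real.exp_pos _
  have hpos_part : max (d2x u₁ t₀ x₀ - d2x u₂ t₀ x₀) 0 ≤ η * (2 * e) :=
    max_le (by linarith) (by positivity)
  have hlam : 0 < lam := by positivity
  refine lt_irrefl (η * (lam * e)) ?_
  calc η * (lam * e) ≤ η * (lam * barrier lam S.T t₀ x₀) := by gcongr; exact exp_le_barrier ..
    _ ≤ C * max (d2x u₁ t₀ x₀ - d2x u₂ t₀ x₀) 0 := htime.trans (hF t₀ ht₀ x₀)
    _ ≤ C * (η * (2 * e)) := mul_le_mul_of_nonneg_left hpos_part hC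
    _ < η * (lam * e) := by nlinarith [mul_pos hη he]

lemma sub_le_add_barrier (h₁ : S.ClassicalSol Φ₁ u₁) (h₂ : S.ClassicalSol Φ₂ u₂)
    (hC : 0 ≤ C) (hF : S.OneSidedLipschitzAlong C u₁ u₂) {B : ℝ} (hB : ∀ x, Φ₁ x - Φ₂ x ≤ B)
    {η : ℝ} (hη : 0 < η) :
    ∀ t ∈ Icc 0 S.T, ∀ x, u₁ t x - u₂ t x ≤ B + η * barrier (2 * C + 1) S.T t x := by
  set ψ : ℝ × ℝ → ℝ :=
    fun p => u₁ p.1 p.2 - u₂ p.1 p.2 - η * barrier (2 * C + 1) S.T p.1 p.2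
  suffices ∀ p ∈ Icc 0 S.T ×ˢ univ, ψ p ≤ B by
    intro t ht x
    linarith [this (t, x) ⟨ht, mem_univ x⟩]
  by_contra! ⟨p₁, hp₁, hBp₁⟩
  obtain ⟨R, hR⟩ : ∃ R, ∀ t ∈ Icc 0 S.T, ∀ x, R ≤ |x| → ψ (t, x) ≤ B := by
    obtain ⟨C₁, hC₁⟩ := h₁.growth
    obtain ⟨C₂, hC₂⟩ := h₂.growth
    obtain ⟨R, hR⟩ := exists_mul_one_add_abs_le_mul_one_add_sq (C₁ + C₂ + |B|) hη
    refine ⟨R, fun t ht x hx => ?_⟩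
    have hu₁ := (le_abs_self _).trans (hC₁ t ht x)
    have hu₂ := neg_le_of_abs_le (hC₂ t ht x)
    have hb := mul_le_mul_of_nonneg_left
      (one_add_sq_le_barrier (lam := 2 * C + 1) (by linarith) ht.2 x) hη.le
    have hB' : -B ≤ |B| * (1 + |x|) :=
      (neg_le_abs B).trans (le_mul_of_one_le_right (abs_nonneg B) (by linarith [abs_nonneg x]))
    simp only [ψ]
    linarith [hR x hx]
  have hcont : ContinuousOn ψ (Icc 0 S.T ×ˢ univ) :=
    (h₁.cont.sub h₂.cont).sub ((continuous_barrier _ _).continuousOn.const_smul η)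
  obtain ⟨⟨t₀, x₀⟩, hp₀, hmax⟩ := hcont.exists_isMaxOn_Icc_prod_univ hR hp₁ hBp₁.le
  have ht₀ : t₀ < S.T := by
    refine lt_of_le_of_ne hp₀.1.2 fun hT => ?_
    have hψT : ψ (t₀, x₀) ≤ B - η * barrier (2 * C + 1) S.T t₀ x₀ := by
      simp only [ψ, hT, h₁.terminal, h₂.terminal]
      linarith [hB x₀]
    have hpos : 0 < barrier (2 * C + 1) S.T t₀ x₀ :=
      (Real.exp_pos _).trans_le (exp_le_barrier ..)
    linarith [isMaxOn_iff.1 hmax p₁ hp₁, mul_pos hη hpos]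
  exact not_isMaxOn_sub_sub_barrier h₁ h₂ hC hF hη ⟨hp₀.1.1, ht₀⟩ hmax

lemma sub_le (h₁ : S.ClassicalSol Φ₁ u₁) (h₂ : S.ClassicalSol Φ₂ u₂) (hC : 0 ≤ C)
    (hF : S.OneSidedLipschitzAlong C u₁ u₂) {B : ℝ} (hB : ∀ x, Φ₁ x - Φ₂ x ≤ B) :
    ∀ t ∈ Icc 0 S.T, ∀ x, u₁ t x - u₂ t x ≤ B := by
  intro t ht x
  have hlim : Tendsto (fun η => B + η * barrier (2 * C + 1) S.T t x) (𝓝[>] 0) (𝓝 B) := by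
    simpa using (tendsto_nhdsWithin_of_tendsto_nhds
      ((continuous_mul_const (barrier (2 * C + 1) S.T t x)).tendsto 0)).const_add B
  exact ge_of_tendsto hlim (eventually_nhdsWithin_of_forall fun η hη =>
    sub_le_add_barrier h₁ h₂ hC hF hB hη t ht x)

end Standing.ClassicalSol

namespace Standing.Hyp

variable {S : Standing} {Φ₁ Φ₂ : ℝ → ℝ} {u₁ u₂ : ℝ → ℝ → ℝ}

lemma sub_le_of_terminal_sub_le (hS : S.Hyp) (h₁ : S.ClassicalSol Φ₁ u₁)
    (h₂ : S.ClassicalSol Φ₂ u₂) {B : ℝ} (hB : ∀ x, Φ₁ x - Φ₂ x ≤ B) :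
    ∀ t ∈ Icc 0 S.T, ∀ x, u₁ t x - u₂ t x ≤ B := by
  obtain ⟨ε, ⟨hε₁, hε₂⟩, hε⟩ := ((h₁.eventually_mem_DepsK.and h₂.eventually_mem_DepsK).and
    (Ioc_mem_nhdsGT S.eps0_mem.1)).exists
  obtain ⟨C, hC, hF⟩ := hS.exists_Fbar_sub_le hε
  exact h₁.sub_le h₂ hC.le (fun t ht x => hF t x _ _ (hε₁ t ht x) (hε₂ t ht x)) hB

end Standing.Hyp

theorem comparison_estimate_classical_general (S : Standing) (hS : S.Hyp)
    (Φ₁ Φ₂ : ℝ → ℝ)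
    (u₁ u₂ : ℝ → ℝ → ℝ)
    (h₁ : Standing.ClassicalSol S Φ₁ u₁) (h₂ : Standing.ClassicalSol S Φ₂ u₂) :
    ∀ B : ℝ, (∀ x : ℝ, |Φ₁ x - Φ₂ x| ≤ B) →
      ∀ t ∈ Set.Icc (0 : ℝ) S.T, ∀ x : ℝ, |u₁ t x - u₂ t x| ≤ B := by
  intro B hB t ht x
  refine abs_sub_le_iff.2 ⟨?_, ?_⟩
  · exact hS.sub_le_of_terminal_sub_le h₁ h₂ (fun y => (le_abs_self _).trans (hB y)) t ht x
  · exact hS.sub_le_of_terminal_sub_le h₂ h₁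
      (fun y => (le_abs_self _).trans ((abs_sub_comm _ _).trans_le (hB y))) t ht x

/-- **Comparison estimate for classical solutions** (used in the proof of Theorem 3.1).
Under the standing assumptions, if `u₁, u₂` are classical solutions with terminal
conditions `Φ₁, Φ₂` whose difference is bounded, then
`sup_{[0,T]×ℝ} |u₁ − u₂| ≤ sup_ℝ |Φ₁ − Φ₂|`. -/
theorem comparison_estimate_classical (S : Standing) (hS : S.Hyp)
    (Φ₁ Φ₂ : ℝ → ℝ) (hΦ₁ : Continuous Φ₁) (hΦ₂ : Continuous Φ₂)
    (hdiff_bdd : ∃ B : ℝ, ∀ x : ℝ, |Φ₁ x - Φ₂ x| ≤ B)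
    (u₁ u₂ : ℝ → ℝ → ℝ)
    (h₁ : Standing.ClassicalSol S Φ₁ u₁) (h₂ : Standing.ClassicalSol S Φ₂ u₂) :
    ∀ B : ℝ, (∀ x : ℝ, |Φ₁ x - Φ₂ x| ≤ B) →
      ∀ t ∈ Set.Icc (0 : ℝ) S.T, ∀ x : ℝ, |u₁ t x - u₂ t x| ≤ B :=
  comparison_estimate_classical_general S hS Φ₁ Φ₂ u₁ u₂ h₁ h₂
end
end

section
/- Second-order small-impact expansion at the PDE level (Proposition 4.2, analytic form): Under the assumptions below, there exists a constant C>0 and ε₁∈(0,ε₀] such that for all ε∈(0,ε₁], sup_{(t,x)∈[0,T]×ℝ} | v^ε(t,x) − v⁰(t,x) − ε·Δv(t,x) | ≤ Cε². -/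
open Set Filter

noncomputable section

/-!
The error `w = v^ε - v⁰ - ε Δv` vanishes at `t = T`, and subtracting the three equations shows
that it solves `∂ₜw + a ∂²ₓw = R^ε` with
`R^ε = (ε/2) c ((∂²ₓv⁰)² - z²) - ε⁻¹ (F̄(εz) - a εz - (c/2) (εz)²)`, `z = ∂²ₓv^ε`.
The bound `|∂²ₓv^ε - ∂²ₓv⁰| = O(ε)` controls the first term and the third-order Taylor remainder
of `F̄` the second, so `|R^ε| ≤ ρ ε²`. As `w` is bounded and `0 ≤ a` is bounded, the maximum
principle for the backward operator `∂ₜ + a ∂²ₓ` on `[0,T] × ℝ` gives `|w| ≤ ρ ε² (T - t)`.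
The maximum principle is proved by penalisation: `u - (ρ + η)(T - t) - θ (x - x₀)²` attains its
maximum, and at a maximum with `t < T` one would have `∂ₜ ≤ 0` and `∂²ₓ ≤ 0`, contradicting the
differential inequality.
-/

open Topology

theorem iteratedDeriv_two_nonpos_of_isLocalMax {f : ℝ → ℝ} {x : ℝ} (hc : ContinuousAt f x)
    (hmax : IsLocalMax f x) : iteratedDeriv 2 f x ≤ 0 := by
  by_contra! hpos
  have hmin : IsLocalMin f x := isLocalMin_of_deriv_deriv_pos
    (by rwa [iteratedDeriv_succ, iteratedDeriv_one] at hpos) hmax.deriv_eq_zero hc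
  have hconst : f =ᶠ[𝓝 x] fun _ => f x := by
    filter_upwards [hmin, hmax] with y hy₁ hy₂ using le_antisymm hy₂ hy₁
  rw [(hconst.iteratedDeriv 2).eq_of_nhds, iteratedDeriv_const] at hpos
  simp at hpos

theorem iteratedDeriv_two_le_of_forall_sub_sq_le {f : ℝ → ℝ} (hf : ContDiff ℝ 2 f) {θ x₀ x : ℝ}
    (hmax : ∀ y, f y - θ * (y - x₀) ^ 2 ≤ f x - θ * (x - x₀) ^ 2) :
    iteratedDeriv 2 f x ≤ 2 * θ := by
  have hq : ContDiff ℝ 2 fun y => θ * (y - x₀) ^ 2 := by fun_prop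
  have h := iteratedDeriv_two_nonpos_of_isLocalMax (hf.continuous.continuousAt.sub (by fun_prop))
    (IsMaxOn.isLocalMax (fun y _ => hmax y) univ_mem)
  rw [iteratedDeriv_sub hf.contDiffAt hq.contDiffAt, iteratedDeriv_const_mul_field,
    iteratedDeriv_comp_sub_const 2 (· ^ 2) x₀] at h
  norm_num [iteratedDeriv_pow] at h
  linarith

theorem HasDerivWithinAt.nonpos_of_isMaxOn_Ico {f : ℝ → ℝ} {f' a b : ℝ} (hab : a < b)
    (hf : HasDerivWithinAt f f' (Ico a b) a) (hmax : IsMaxOn f (Ico a b) a) : f' ≤ 0 := by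
  have hcone : b - a ∈ posTangentConeAt (Ico a b) a :=
    sub_mem_posTangentConeAt_of_openSegment_subset
      (by rw [openSegment_eq_Ioo hab]; exact Ioo_subset_Ico_self)
  have := hmax.localize.hasFDerivWithinAt_nonpos hf hcone
  simp only [ContinuousLinearMap.toSpanSingleton_apply, smul_eq_mul] at this
  nlinarith [sub_pos.mpr hab]

theorem exists_isMaxOn_sub_mul_sq {s : Set ℝ} (hs : IsCompact s) {t₀ : ℝ} (ht₀ : t₀ ∈ s)
    {f : ℝ × ℝ → ℝ} (hf : ContinuousOn f (s ×ˢ univ)) {M : ℝ} (hM : ∀ p ∈ s ×ˢ univ, f p ≤ M)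
    {θ : ℝ} (hθ : 0 < θ) (x₀ : ℝ) :
    ∃ p ∈ s ×ˢ univ, IsMaxOn (fun p => f p - θ * (p.2 - x₀) ^ 2) (s ×ˢ univ) p := by
  have hp₀ : (t₀, x₀) ∈ s ×ˢ univ := ⟨ht₀, trivial⟩
  -- beyond `|x - x₀| = R` the penalty exceeds `M - f (t₀, x₀)`
  set R := √((M - f (t₀, x₀)) / θ)
  refine (hf.sub (by fun_prop)).exists_isMaxOn' (hs.isClosed.prod isClosed_univ) hp₀ ?_
  have hK : IsCompact (s ×ˢ Icc (x₀ - R) (x₀ + R)) := hs.prod isCompact_Icc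
  filter_upwards [mem_inf_of_left hK.compl_mem_cocompact,
    mem_inf_of_right (mem_principal_self _)] with p hpK hpS
  have hR : R < |p.2 - x₀| := by
    by_contra! h
    exact hpK ⟨hpS.1, by constructor <;> linarith [abs_le.mp h]⟩
  have hfar : M - f (t₀, x₀) < θ * (p.2 - x₀) ^ 2 := by
    rwa [← sq_abs, mul_comm, ← div_lt_iff₀ hθ, ← Real.sqrt_lt' ((Real.sqrt_nonneg _).trans_lt hR)]
  show f p - θ * (p.2 - x₀) ^ 2 ≤ f (t₀, x₀) - θ * (x₀ - x₀) ^ 2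
  linarith [hM p hpS]

theorem abs_le_mul_abs_of_hasDerivAt {g g' : ℝ → ℝ} {ζ B : ℝ} (hg0 : g 0 = 0)
    (hg : ∀ y ∈ uIcc 0 ζ, HasDerivAt g (g' y) y) (hB : ∀ y ∈ uIcc 0 ζ, |g' y| ≤ B) :
    ∀ y ∈ uIcc 0 ζ, |g y| ≤ B * |ζ| := by
  intro y hy
  have hsub : uIcc 0 y ⊆ uIcc 0 ζ := uIcc_subset_uIcc left_mem_uIcc hy
  have hmvt := (convex_uIcc 0 y).norm_image_sub_le_of_norm_hasDerivWithin_le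
    (fun z hz => (hg z (hsub hz)).hasDerivWithinAt) (fun z hz => hB z (hsub hz))
    left_mem_uIcc right_mem_uIcc
  have hB0 : 0 ≤ B := (abs_nonneg _).trans (hB 0 left_mem_uIcc)
  simp only [hg0, sub_zero, Real.norm_eq_abs] at hmvt
  exact hmvt.trans (mul_le_mul_of_nonneg_left (by simpa using abs_sub_left_of_mem_uIcc hy) hB0)

theorem abs_sub_taylor_two_le {F F₁ F₂ F₃ : ℝ → ℝ} {δ K ζ : ℝ}
    (h₁ : ∀ z ∈ Ioo (-δ) δ, HasDerivAt F (F₁ z) z)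
    (h₂ : ∀ z ∈ Ioo (-δ) δ, HasDerivAt F₁ (F₂ z) z)
    (h₃ : ∀ z ∈ Ioo (-δ) δ, HasDerivAt F₂ (F₃ z) z)
    (hK : ∀ z ∈ Ioo (-δ) δ, |F₃ z| ≤ K) (hζ : |ζ| < δ) :
    |F ζ - F 0 - F₁ 0 * ζ - F₂ 0 / 2 * ζ ^ 2| ≤ K * |ζ| ^ 3 := by
  have hsub : uIcc 0 ζ ⊆ Ioo (-δ) δ :=
    (uIcc_subset_Icc ⟨by linarith [abs_nonneg ζ], by linarith [abs_nonneg ζ]⟩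
      ⟨neg_abs_le ζ, le_abs_self ζ⟩).trans (Icc_subset_Ioo (neg_lt_neg hζ) hζ)
  have hbound₂ := abs_le_mul_abs_of_hasDerivAt (g := fun z => F₂ z - F₂ 0) (by simp)
    (fun z hz => (h₃ z (hsub hz)).sub_const _) (fun z hz => hK z (hsub hz))
  have hbound₁ := abs_le_mul_abs_of_hasDerivAt (g := fun z => F₁ z - F₁ 0 - F₂ 0 * z) (by simp)
    (fun z hz => by
      simpa using ((h₂ z (hsub hz)).sub_const _).fun_sub ((hasDerivAt_id' z).const_mul _))
    hbound₂
  have hbound₀ := abs_le_mul_abs_of_hasDerivAt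
    (g := fun z => F z - F 0 - F₁ 0 * z - F₂ 0 / 2 * z ^ 2) (by simp)
    (fun z hz => by
      refine ((((h₁ z (hsub hz)).sub_const _).fun_sub ((hasDerivAt_id' z).const_mul _)).fun_sub
        ((hasDerivAt_pow 2 z).const_mul (F₂ 0 / 2))).congr_deriv ?_
      norm_num
      ring)
    hbound₁ ζ right_mem_uIcc
  calc _ ≤ K * |ζ| * |ζ| * |ζ| := hbound₀
    _ = K * |ζ| ^ 3 := by ring

section MaximumPrinciple

variable {T ρ A : ℝ} {a u ut : ℝ → ℝ → ℝ}

theorem le_add_mul_of_parabolic_subsolution {η : ℝ} (hη : 0 < η)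
    (ha : ∀ t ∈ Ico 0 T, ∀ x, 0 ≤ a t x ∧ a t x ≤ A)
    (hu : ContinuousOn (fun p : ℝ × ℝ => u p.1 p.2) (Icc 0 T ×ˢ univ))
    {M : ℝ} (hM : ∀ t ∈ Icc 0 T, ∀ x, u t x ≤ M) (huT : ∀ x, u T x ≤ 0)
    (hu_x : ∀ t ∈ Ico 0 T, ContDiff ℝ 2 (u t))
    (hu_t : ∀ t ∈ Ico 0 T, ∀ x, HasDerivWithinAt (u · x) (ut t x) (Ico 0 T) t)
    (hsub : ∀ t ∈ Ico 0 T, ∀ x, -ρ ≤ ut t x + a t x * d2x u t x)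
    {t₀ : ℝ} (ht₀ : t₀ ∈ Icc 0 T) (x₀ : ℝ) :
    u t₀ x₀ ≤ (ρ + η) * (T - t₀) := by
  set κ := ρ + η
  set θ := η / (2 * |A| + 1)
  have hθ : 0 < θ := by positivity
  have hbdd : ∀ p ∈ Icc 0 T ×ˢ univ, u p.1 p.2 - κ * (T - p.1) ≤ M + |κ| * T := fun p hp => by
    nlinarith [hM p.1 hp.1 p.2, neg_abs_le κ, abs_nonneg κ, hp.1.1, hp.1.2]
  obtain ⟨⟨t, x⟩, ⟨ht : t ∈ Icc 0 T, -⟩, hmax⟩ := exists_isMaxOn_sub_mul_sq isCompact_Icc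
    ⟨ht₀.1.trans ht₀.2, le_rfl⟩ (hu.sub (by fun_prop)) hbdd hθ x₀
  have hψ : ∀ s ∈ Icc 0 T, ∀ y, u s y - κ * (T - s) - θ * (y - x₀) ^ 2 ≤
      u t x - κ * (T - t) - θ * (x - x₀) ^ 2 := fun s hs y =>
    isMaxOn_iff.mp hmax (s, y) ⟨hs, trivial⟩
  -- at an interior maximum the penalised equation would force `κ ≤ ρ + 2|A|θ < κ`
  have htT : t = T := by
    by_contra hne
    have ht' : t ∈ Ico 0 T := ⟨ht.1, lt_of_le_of_ne ht.2 hne⟩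
    have hderiv : HasDerivWithinAt (fun s => u s x + κ * s) (ut t x + κ) (Ico t T) t := by
      simpa using ((hu_t t ht' x).fun_add ((hasDerivWithinAt_id t _).const_mul κ)).mono
        (Ico_subset_Ico_left ht.1)
    have htime : ut t x + κ ≤ 0 := hderiv.nonpos_of_isMaxOn_Ico ht'.2 fun s hs => by
      have := hψ s ⟨ht.1.trans hs.1, hs.2.le⟩ x
      show u s x + κ * s ≤ u t x + κ * t
      linarith
    have hspace : d2x u t x ≤ 2 * θ :=
      iteratedDeriv_two_le_of_forall_sub_sq_le (x₀ := x₀) (hu_x t ht') fun y => by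
        linarith [hψ t ht y]
    obtain ⟨ha₀, haA⟩ := ha t ht' x
    have hdiffusion : a t x * d2x u t x ≤ 2 * |A| * θ := by
      nlinarith [le_abs_self A]
    have hsmall : 2 * |A| * θ < η := by
      rw [show 2 * |A| * θ = η * (2 * |A|) / (2 * |A| + 1) by ring, div_lt_iff₀ (by positivity)]
      nlinarith
    linarith [hsub t ht' x]
  have := hψ t₀ ht₀ x₀
  rw [htT] at this
  nlinarith [huT x, mul_nonneg hθ.le (sq_nonneg (x - x₀))]

theorem parabolic_maximum_principle
    (ha : ∀ t ∈ Ico 0 T, ∀ x, 0 ≤ a t x ∧ a t x ≤ A)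
    (hu : ContinuousOn (fun p : ℝ × ℝ => u p.1 p.2) (Icc 0 T ×ˢ univ))
    {M : ℝ} (hM : ∀ t ∈ Icc 0 T, ∀ x, u t x ≤ M) (huT : ∀ x, u T x ≤ 0)
    (hu_x : ∀ t ∈ Ico 0 T, ContDiff ℝ 2 (u t))
    (hu_t : ∀ t ∈ Ico 0 T, ∀ x, HasDerivWithinAt (u · x) (ut t x) (Ico 0 T) t)
    (hsub : ∀ t ∈ Ico 0 T, ∀ x, -ρ ≤ ut t x + a t x * d2x u t x)
    {t₀ : ℝ} (ht₀ : t₀ ∈ Icc 0 T) (x₀ : ℝ) :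
    u t₀ x₀ ≤ ρ * (T - t₀) := by
  have hlim : Tendsto (fun η => (ρ + η) * (T - t₀)) (𝓝[>] 0) (𝓝 (ρ * (T - t₀))) :=
    tendsto_nhdsWithin_of_tendsto_nhds <| by
      simpa using (show Continuous fun η : ℝ => (ρ + η) * (T - t₀) by fun_prop).tendsto 0
  exact ge_of_tendsto hlim (eventually_nhdsWithin_of_forall fun η hη =>
    le_add_mul_of_parabolic_subsolution hη ha hu hM huT hu_x hu_t hsub ht₀ x₀)

theorem abs_le_of_abs_parabolic_residual_le
    (ha : ∀ t ∈ Ico 0 T, ∀ x, 0 ≤ a t x ∧ a t x ≤ A)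
    (hu : ContinuousOn (fun p : ℝ × ℝ => u p.1 p.2) (Icc 0 T ×ˢ univ))
    {M : ℝ} (hM : ∀ t ∈ Icc 0 T, ∀ x, |u t x| ≤ M) (huT : ∀ x, u T x = 0)
    (hu_x : ∀ t ∈ Ico 0 T, ContDiff ℝ 2 (u t))
    (hu_t : ∀ t ∈ Ico 0 T, ∀ x, HasDerivWithinAt (u · x) (ut t x) (Ico 0 T) t)
    (hres : ∀ t ∈ Ico 0 T, ∀ x, |ut t x + a t x * d2x u t x| ≤ ρ)
    {t₀ : ℝ} (ht₀ : t₀ ∈ Icc 0 T) (x₀ : ℝ) :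
    |u t₀ x₀| ≤ ρ * (T - t₀) := by
  refine abs_le.mpr ⟨?_, parabolic_maximum_principle ha hu (fun t ht x => (abs_le.mp (hM t ht x)).2)
    (fun x => (huT x).le) hu_x hu_t (fun t ht x => (abs_le.mp (hres t ht x)).1) ht₀ x₀⟩
  have hneg := parabolic_maximum_principle (u := fun t x => -u t x) (ut := fun t x => -ut t x) ha
    hu.neg (fun t ht x => neg_le.mpr (abs_le.mp (hM t ht x)).1) (fun x => by simp [huT x])
    (fun t ht => (hu_x t ht).neg) (fun t ht x => (hu_t t ht x).neg)
    (fun t ht x => by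
      have := (abs_le.mp (hres t ht x)).2
      simp only [d2x, iteratedDeriv_fun_neg] at this ⊢
      linarith) ht₀ x₀
  linarith

end MaximumPrinciple

theorem d2x_sub_sub_const_mul {u v w : ℝ → ℝ → ℝ} {t : ℝ} (hu : ContDiff ℝ 2 (u t))
    (hv : ContDiff ℝ 2 (v t)) (hw : ContDiff ℝ 2 (w t)) (ε x : ℝ) :
    d2x (fun t x => u t x - v t x - ε * w t x) t x = d2x u t x - d2x v t x - ε * d2x w t x := by
  simp only [d2x]
  rw [iteratedDeriv_fun_sub (hu.sub hv).contDiffAt (contDiff_const.mul hw).contDiffAt,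
    iteratedDeriv_fun_sub hu.contDiffAt hv.contDiffAt, iteratedDeriv_const_mul_field]

theorem abs_expansion_residual_le {F : ℝ → ℝ} {a c z z₀ Δz ε δ K C Cc : ℝ} (hε : 0 < ε)
    (hεδ : ε ≤ δ / (C + 1)) (hK : 0 ≤ K) (hc : |c| ≤ Cc)
    (hF : ∀ ζ, |ζ| < δ → |F ζ - a * ζ - c / 2 * ζ ^ 2| ≤ K * |ζ| ^ 3)
    (hC : |z| + |z₀| + |Δz| + ε⁻¹ * |z - z₀| ≤ C) :
    |-(ε⁻¹ * F (ε * z)) - -(a * z₀) - ε * -(a * Δz + 1 / 2 * c * z₀ ^ 2)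
      + a * (z - z₀ - ε * Δz)| ≤ (Cc * C ^ 2 + K * C ^ 3) * ε ^ 2 := by
  have hquot : 0 ≤ ε⁻¹ * |z - z₀| := by positivity
  have hz : |z| ≤ C := by linarith [abs_nonneg z₀, abs_nonneg Δz]
  have hz₀ : |z₀| ≤ C := by linarith [abs_nonneg z, abs_nonneg Δz]
  have hzz₀ : |z - z₀| ≤ ε * C := by
    calc |z - z₀| = ε * (ε⁻¹ * |z - z₀|) := by field_simp
      _ ≤ ε * C := by gcongr; linarith [abs_nonneg z, abs_nonneg z₀, abs_nonneg Δz]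
  have hC₀ : 0 ≤ C := (abs_nonneg z).trans hz
  have hδ : 0 < δ := (div_pos_iff_of_pos_right (by positivity)).mp (hε.trans_le hεδ)
  have hεz : |ε * z| ≤ ε * C := by rw [abs_mul, abs_of_pos hε]; gcongr
  have hsmall : |ε * z| < δ := by
    calc |ε * z| ≤ δ / (C + 1) * C := hεz.trans (by gcongr)
      _ < δ := by
        rw [div_mul_eq_mul_div, div_lt_iff₀ (by positivity)]
        nlinarith
  have hsplit : -(ε⁻¹ * F (ε * z)) - -(a * z₀) - ε * -(a * Δz + 1 / 2 * c * z₀ ^ 2)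
      + a * (z - z₀ - ε * Δz) = ε / 2 * c * ((z₀ - z) * (z₀ + z))
        - ε⁻¹ * (F (ε * z) - a * (ε * z) - c / 2 * (ε * z) ^ 2) := by
    field_simp
    ring
  have hc₁ : |ε / 2 * c * ((z₀ - z) * (z₀ + z))| ≤ Cc * C ^ 2 * ε ^ 2 := by
    rw [abs_mul, abs_mul, abs_mul, abs_of_pos (half_pos hε), abs_sub_comm]
    have : |z₀ + z| ≤ 2 * C := (abs_add_le _ _).trans (by linarith)
    have hCc : 0 ≤ Cc := (abs_nonneg c).trans hc
    calc ε / 2 * |c| * (|z - z₀| * |z₀ + z|) ≤ ε / 2 * Cc * (ε * C * (2 * C)) := by gcongr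
      _ = Cc * C ^ 2 * ε ^ 2 := by ring
  have hc₂ : |ε⁻¹ * (F (ε * z) - a * (ε * z) - c / 2 * (ε * z) ^ 2)| ≤ K * C ^ 3 * ε ^ 2 := by
    rw [abs_mul, abs_inv, abs_of_pos hε]
    calc ε⁻¹ * |F (ε * z) - a * (ε * z) - c / 2 * (ε * z) ^ 2| ≤ ε⁻¹ * (K * (ε * C) ^ 3) := by
          gcongr
          exact (hF _ hsmall).trans (by gcongr)
      _ = K * C ^ 3 * ε ^ 2 := by field_simp
  rw [hsplit]
  exact (abs_sub _ _).trans (by linarith)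

theorem small_impact_expansion_general
    (T : ℝ) (hT : 0 < T) (ε₀ : ℝ) (hε₀ : ε₀ ∈ Set.Ioc (0 : ℝ) 1)
    (δ : ℝ) (hδ : 0 < δ)
    (D : Set (ℝ × ℝ × ℝ))
    (hD_nbhd : ∀ t ∈ Set.Icc (0 : ℝ) T, ∀ x : ℝ, ∀ z ∈ Set.Ioo (-δ) δ, (t, x, z) ∈ D)
    (Fbar Fz Fzz Fzzz : ℝ → ℝ → ℝ → ℝ)
    (hF0 : ∀ t ∈ Set.Icc (0 : ℝ) T, ∀ x : ℝ, Fbar t x 0 = 0)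
    -- `F̄` is three times continuously differentiable in `z`
    (hFz : ∀ t ∈ Set.Icc (0 : ℝ) T, ∀ x : ℝ, ∀ z ∈ Set.Ioo (-δ) δ,
      HasDerivAt (fun w => Fbar t x w) (Fz t x z) z)
    (hFzz : ∀ t ∈ Set.Icc (0 : ℝ) T, ∀ x : ℝ, ∀ z ∈ Set.Ioo (-δ) δ,
      HasDerivAt (fun w => Fz t x w) (Fzz t x z) z)
    (hFzzz : ∀ t ∈ Set.Icc (0 : ℝ) T, ∀ x : ℝ, ∀ z ∈ Set.Ioo (-δ) δ,
      HasDerivAt (fun w => Fzz t x w) (Fzzz t x z) z)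
    (K : ℝ) (hK : 0 < K)
    (hFzzz_bdd : ∀ t ∈ Set.Icc (0 : ℝ) T, ∀ x : ℝ, ∀ z : ℝ,
      (t, x, z) ∈ D → |z| ≤ δ → |Fzzz t x z| ≤ K)
    (a c : ℝ → ℝ → ℝ)
    (ha_def : ∀ t x : ℝ, a t x = Fz t x 0) (hc_def : ∀ t x : ℝ, c t x = Fzz t x 0)
    (ha_bdd : ∃ C : ℝ, ∀ t ∈ Set.Icc (0 : ℝ) T, ∀ x : ℝ, |a t x| ≤ C)
    (ha_nonneg : ∀ t ∈ Set.Icc (0 : ℝ) T, ∀ x : ℝ, 0 ≤ a t x)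
    (hc_bdd : ∃ C : ℝ, ∀ t ∈ Set.Icc (0 : ℝ) T, ∀ x : ℝ, |c t x| ≤ C)
    (g : ℝ → ℝ)
    (veps : ℝ → ℝ → ℝ → ℝ) (v0 Δv : ℝ → ℝ → ℝ)
    -- the family `v^ε` of solutions of `∂ₜ v^ε + ε⁻¹ F̄(·, ε ∂²ₓ v^ε) = 0`, `v^ε(T,·) = ĝ`
    (hveps : ∀ ε ∈ Set.Ioc (0 : ℝ) ε₀,
      ContinuousOn (fun p : ℝ × ℝ => veps ε p.1 p.2) (Set.Icc 0 T ×ˢ Set.univ) ∧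
      (∀ t ∈ Set.Ico (0 : ℝ) T, ContDiff ℝ 2 fun y => veps ε t y) ∧
      (∀ n : ℕ, n ≤ 2 → ContinuousOn
        (fun p : ℝ × ℝ => iteratedDeriv n (fun y => veps ε p.1 y) p.2)
        (Set.Ico 0 T ×ˢ Set.univ)) ∧
      (∀ x : ℝ, veps ε T x = g x) ∧
      (∀ t ∈ Set.Ico (0 : ℝ) T, ∀ x : ℝ,
        (t, x, ε * d2x (veps ε) t x) ∈ D ∧
        HasDerivWithinAt (fun s => veps ε s x)
          (-(ε⁻¹ * Fbar t x (ε * d2x (veps ε) t x))) (Set.Ico 0 T) t))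
    -- `v⁰` solves `∂ₜ v⁰ + a ∂²ₓ v⁰ = 0`, `v⁰(T,·) = ĝ`
    (hv0 : ContinuousOn (fun p : ℝ × ℝ => v0 p.1 p.2) (Set.Icc 0 T ×ˢ Set.univ) ∧
      (∀ t ∈ Set.Ico (0 : ℝ) T, ContDiff ℝ 2 fun y => v0 t y) ∧
      (∀ n : ℕ, n ≤ 2 → ContinuousOn
        (fun p : ℝ × ℝ => iteratedDeriv n (fun y => v0 p.1 y) p.2)
        (Set.Ico 0 T ×ˢ Set.univ)) ∧
      (∀ x : ℝ, v0 T x = g x) ∧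
      (∀ t ∈ Set.Ico (0 : ℝ) T, ∀ x : ℝ,
        HasDerivWithinAt (fun s => v0 s x) (-(a t x * d2x v0 t x)) (Set.Ico 0 T) t))
    -- `Δv` is bounded and solves `∂ₜ Δv + a ∂²ₓ Δv + (1/2) c (∂²ₓ v⁰)² = 0`, `Δv(T,·) = 0`
    (hΔv : ContinuousOn (fun p : ℝ × ℝ => Δv p.1 p.2) (Set.Icc 0 T ×ˢ Set.univ) ∧
      (∃ C : ℝ, ∀ t ∈ Set.Icc (0 : ℝ) T, ∀ x : ℝ, |Δv t x| ≤ C) ∧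
      (∀ t ∈ Set.Ico (0 : ℝ) T, ContDiff ℝ 2 fun y => Δv t y) ∧
      (∀ n : ℕ, n ≤ 2 → ContinuousOn
        (fun p : ℝ × ℝ => iteratedDeriv n (fun y => Δv p.1 y) p.2)
        (Set.Ico 0 T ×ˢ Set.univ)) ∧
      (∀ x : ℝ, Δv T x = 0) ∧
      (∀ t ∈ Set.Ico (0 : ℝ) T, ∀ x : ℝ,
        HasDerivWithinAt (fun s => Δv s x)
          (-(a t x * d2x Δv t x + (1 / 2) * c t x * (d2x v0 t x) ^ 2)) (Set.Ico 0 T) t))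
    -- uniform bounds
    (hunif : ∃ C : ℝ, ∀ ε ∈ Set.Ioc (0 : ℝ) ε₀, ∀ t ∈ Set.Ico (0 : ℝ) T, ∀ x : ℝ,
      |d2x (veps ε) t x| + |d2x v0 t x| + |d2x Δv t x|
        + ε⁻¹ * |d2x (veps ε) t x - d2x v0 t x| ≤ C)
    (hbd : ∀ ε ∈ Set.Ioc (0 : ℝ) ε₀, ∃ C : ℝ, ∀ t ∈ Set.Icc (0 : ℝ) T, ∀ x : ℝ,
      |veps ε t x - v0 t x - ε * Δv t x| ≤ C) :
    ∃ C > (0 : ℝ), ∃ ε₁ ∈ Set.Ioc (0 : ℝ) ε₀, ∀ ε ∈ Set.Ioc (0 : ℝ) ε₁,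
      ∀ t ∈ Set.Icc (0 : ℝ) T, ∀ x : ℝ,
        |veps ε t x - v0 t x - ε * Δv t x| ≤ C * ε ^ 2 := by
  obtain ⟨Cu, hCu⟩ := hunif
  obtain ⟨A, hA⟩ := ha_bdd
  obtain ⟨Cc, hCc⟩ := hc_bdd
  have hCu₀ : 0 ≤ Cu := by
    have := hCu ε₀ ⟨hε₀.1, le_rfl⟩ 0 ⟨le_rfl, hT⟩ 0
    linarith [abs_nonneg (d2x (veps ε₀) 0 0), abs_nonneg (d2x v0 0 0), abs_nonneg (d2x Δv 0 0),
      mul_nonneg (inv_nonneg.mpr hε₀.1.le) (abs_nonneg (d2x (veps ε₀) 0 0 - d2x v0 0 0))]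
  have hCc₀ : 0 ≤ Cc := (abs_nonneg _).trans (hCc 0 ⟨le_rfl, hT.le⟩ 0)
  set ρ := Cc * Cu ^ 2 + K * Cu ^ 3
  refine ⟨ρ * T + 1, by positivity, min ε₀ (δ / (Cu + 1)),
    ⟨lt_min hε₀.1 (by positivity), min_le_left _ _⟩, fun ε hε t ht x => ?_⟩
  have hε' : ε ∈ Ioc 0 ε₀ := ⟨hε.1, hε.2.trans (min_le_left _ _)⟩
  obtain ⟨hvc, hvx, -, hvT, hvt⟩ := hveps ε hε'
  obtain ⟨h0c, h0x, -, h0T, h0t⟩ := hv0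
  obtain ⟨hΔc, -, hΔx, -, hΔT, hΔt⟩ := hΔv
  obtain ⟨M, hM⟩ := hbd ε hε'
  have hres : ∀ s ∈ Ico 0 T, ∀ y, |-(ε⁻¹ * Fbar s y (ε * d2x (veps ε) s y)) - -(a s y * d2x v0 s y)
      - ε * -(a s y * d2x Δv s y + 1 / 2 * c s y * d2x v0 s y ^ 2)
      + a s y * d2x (fun t x => veps ε t x - v0 t x - ε * Δv t x) s y| ≤ ρ * ε ^ 2 := by
    intro s hs y
    have hs' := Ico_subset_Icc_self hs
    rw [d2x_sub_sub_const_mul (hvx s hs) (h0x s hs) (hΔx s hs)]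
    refine abs_expansion_residual_le hε.1 (hε.2.trans (min_le_right _ _)) hK.le (hCc s hs' y)
      (fun ζ hζ => ?_) (hCu ε hε' s hs y)
    simpa [hF0 s hs' y, ha_def, hc_def] using abs_sub_taylor_two_le (hFz s hs' y) (hFzz s hs' y)
      (hFzzz s hs' y) (fun z hz => hFzzz_bdd s hs' y z (hD_nbhd s hs' y z hz) (abs_lt.mpr hz).le) hζ
  calc |veps ε t x - v0 t x - ε * Δv t x| ≤ ρ * ε ^ 2 * (T - t) :=
        abs_le_of_abs_parabolic_residual_le (u := fun t x => veps ε t x - v0 t x - ε * Δv t x)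
          (fun s hs y => ⟨ha_nonneg s (Ico_subset_Icc_self hs) y,
            (le_abs_self _).trans (hA s (Ico_subset_Icc_self hs) y)⟩)
          ((hvc.sub h0c).sub (continuousOn_const.mul hΔc)) hM (fun y => by simp [hvT, h0T, hΔT])
          (fun s hs => ((hvx s hs).sub (h0x s hs)).sub (contDiff_const.mul (hΔx s hs)))
          (fun s hs y => ((hvt s hs y).2.sub (h0t s hs y)).sub ((hΔt s hs y).const_mul ε))
          hres ht x
    _ ≤ (ρ * T + 1) * ε ^ 2 := by
      have hρ : 0 ≤ ρ * ε ^ 2 := by positivity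
      nlinarith [mul_nonneg hρ ht.1, sq_nonneg ε]

/-- **Proposition 4.2** (second-order small-impact expansion at the PDE level).
With `v^ε` the super-hedging price in the model with impact scaled by `ε`, `v⁰` the
price in the impact-free model and `Δv` the first-order correction, there exist `C > 0`
and `ε₁ ∈ (0,ε₀]` such that `sup_{[0,T]×ℝ} |v^ε − v⁰ − ε Δv| ≤ C ε²` for all
`ε ∈ (0,ε₁]`. -/
theorem small_impact_expansion
    (T : ℝ) (hT : 0 < T) (ε₀ : ℝ) (hε₀ : ε₀ ∈ Set.Ioc (0 : ℝ) 1)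
    (δ : ℝ) (hδ : 0 < δ)
    (D : Set (ℝ × ℝ × ℝ))
    (hD_sub : ∀ p ∈ D, p.1 ∈ Set.Icc (0 : ℝ) T)
    (hD_nbhd : ∀ t ∈ Set.Icc (0 : ℝ) T, ∀ x : ℝ, ∀ z ∈ Set.Ioo (-δ) δ, (t, x, z) ∈ D)
    (Fbar Fz Fzz Fzzz : ℝ → ℝ → ℝ → ℝ)
    (hF0 : ∀ t ∈ Set.Icc (0 : ℝ) T, ∀ x : ℝ, Fbar t x 0 = 0)
    -- `F̄` is three times continuously differentiable in `z`
    (hFz : ∀ t ∈ Set.Icc (0 : ℝ) T, ∀ x : ℝ, ∀ z ∈ Set.Ioo (-δ) δ,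
      HasDerivAt (fun w => Fbar t x w) (Fz t x z) z)
    (hFzz : ∀ t ∈ Set.Icc (0 : ℝ) T, ∀ x : ℝ, ∀ z ∈ Set.Ioo (-δ) δ,
      HasDerivAt (fun w => Fz t x w) (Fzz t x z) z)
    (hFzzz : ∀ t ∈ Set.Icc (0 : ℝ) T, ∀ x : ℝ, ∀ z ∈ Set.Ioo (-δ) δ,
      HasDerivAt (fun w => Fzz t x w) (Fzzz t x z) z)
    (hFzzz_cont : ∀ t ∈ Set.Icc (0 : ℝ) T, ∀ x : ℝ,
      ContinuousOn (fun z => Fzzz t x z) (Set.Ioo (-δ) δ))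
    (K : ℝ) (hK : 0 < K)
    (hFzzz_bdd : ∀ t ∈ Set.Icc (0 : ℝ) T, ∀ x : ℝ, ∀ z : ℝ,
      (t, x, z) ∈ D → |z| ≤ δ → |Fzzz t x z| ≤ K)
    (a c : ℝ → ℝ → ℝ)
    (ha_def : ∀ t x : ℝ, a t x = Fz t x 0) (hc_def : ∀ t x : ℝ, c t x = Fzz t x 0)
    (ha_cont : ContinuousOn (fun p : ℝ × ℝ => a p.1 p.2) (Set.Icc 0 T ×ˢ Set.univ))
    (ha_bdd : ∃ C : ℝ, ∀ t ∈ Set.Icc (0 : ℝ) T, ∀ x : ℝ, |a t x| ≤ C)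
    (ha_nonneg : ∀ t ∈ Set.Icc (0 : ℝ) T, ∀ x : ℝ, 0 ≤ a t x)
    (hc_cont : ContinuousOn (fun p : ℝ × ℝ => c p.1 p.2) (Set.Icc 0 T ×ˢ Set.univ))
    (hc_bdd : ∃ C : ℝ, ∀ t ∈ Set.Icc (0 : ℝ) T, ∀ x : ℝ, |c t x| ≤ C)
    (g : ℝ → ℝ)
    (veps : ℝ → ℝ → ℝ → ℝ) (v0 Δv : ℝ → ℝ → ℝ)
    -- the family `v^ε` of solutions of `∂ₜ v^ε + ε⁻¹ F̄(·, ε ∂²ₓ v^ε) = 0`, `v^ε(T,·) = ĝ`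
    (hveps : ∀ ε ∈ Set.Ioc (0 : ℝ) ε₀,
      ContinuousOn (fun p : ℝ × ℝ => veps ε p.1 p.2) (Set.Icc 0 T ×ˢ Set.univ) ∧
      (∀ t ∈ Set.Ico (0 : ℝ) T, ContDiff ℝ 2 fun y => veps ε t y) ∧
      (∀ n : ℕ, n ≤ 2 → ContinuousOn
        (fun p : ℝ × ℝ => iteratedDeriv n (fun y => veps ε p.1 y) p.2)
        (Set.Ico 0 T ×ˢ Set.univ)) ∧
      (∀ x : ℝ, veps ε T x = g x) ∧
      (∀ t ∈ Set.Ico (0 : ℝ) T, ∀ x : ℝ,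
        (t, x, ε * d2x (veps ε) t x) ∈ D ∧
        HasDerivWithinAt (fun s => veps ε s x)
          (-(ε⁻¹ * Fbar t x (ε * d2x (veps ε) t x))) (Set.Ico 0 T) t))
    -- `v⁰` solves `∂ₜ v⁰ + a ∂²ₓ v⁰ = 0`, `v⁰(T,·) = ĝ`
    (hv0 : ContinuousOn (fun p : ℝ × ℝ => v0 p.1 p.2) (Set.Icc 0 T ×ˢ Set.univ) ∧
      (∀ t ∈ Set.Ico (0 : ℝ) T, ContDiff ℝ 2 fun y => v0 t y) ∧
      (∀ n : ℕ, n ≤ 2 → ContinuousOn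
        (fun p : ℝ × ℝ => iteratedDeriv n (fun y => v0 p.1 y) p.2)
        (Set.Ico 0 T ×ˢ Set.univ)) ∧
      (∀ x : ℝ, v0 T x = g x) ∧
      (∀ t ∈ Set.Ico (0 : ℝ) T, ∀ x : ℝ,
        HasDerivWithinAt (fun s => v0 s x) (-(a t x * d2x v0 t x)) (Set.Ico 0 T) t))
    -- `Δv` is bounded and solves `∂ₜ Δv + a ∂²ₓ Δv + (1/2) c (∂²ₓ v⁰)² = 0`, `Δv(T,·) = 0`
    (hΔv : ContinuousOn (fun p : ℝ × ℝ => Δv p.1 p.2) (Set.Icc 0 T ×ˢ Set.univ) ∧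
      (∃ C : ℝ, ∀ t ∈ Set.Icc (0 : ℝ) T, ∀ x : ℝ, |Δv t x| ≤ C) ∧
      (∀ t ∈ Set.Ico (0 : ℝ) T, ContDiff ℝ 2 fun y => Δv t y) ∧
      (∀ n : ℕ, n ≤ 2 → ContinuousOn
        (fun p : ℝ × ℝ => iteratedDeriv n (fun y => Δv p.1 y) p.2)
        (Set.Ico 0 T ×ˢ Set.univ)) ∧
      (∀ x : ℝ, Δv T x = 0) ∧
      (∀ t ∈ Set.Ico (0 : ℝ) T, ∀ x : ℝ,
        HasDerivWithinAt (fun s => Δv s x)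
          (-(a t x * d2x Δv t x + (1 / 2) * c t x * (d2x v0 t x) ^ 2)) (Set.Ico 0 T) t))
    -- uniform bounds
    (hunif : ∃ C : ℝ, ∀ ε ∈ Set.Ioc (0 : ℝ) ε₀, ∀ t ∈ Set.Ico (0 : ℝ) T, ∀ x : ℝ,
      |d2x (veps ε) t x| + |d2x v0 t x| + |d2x Δv t x|
        + ε⁻¹ * |d2x (veps ε) t x - d2x v0 t x| ≤ C)
    (hbd : ∀ ε ∈ Set.Ioc (0 : ℝ) ε₀, ∃ C : ℝ, ∀ t ∈ Set.Icc (0 : ℝ) T, ∀ x : ℝ,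
      |veps ε t x - v0 t x - ε * Δv t x| ≤ C) :
    ∃ C > (0 : ℝ), ∃ ε₁ ∈ Set.Ioc (0 : ℝ) ε₀, ∀ ε ∈ Set.Ioc (0 : ℝ) ε₁,
      ∀ t ∈ Set.Icc (0 : ℝ) T, ∀ x : ℝ,
        |veps ε t x - v0 t x - ε * Δv t x| ≤ C * ε ^ 2 :=
  small_impact_expansion_general T hT ε₀ hε₀ δ hδ D hD_nbhd Fbar Fz Fzz Fzzz hF0 hFz hFzz hFzzz K hK
    hFzzz_bdd a c ha_def hc_def ha_bdd ha_nonneg hc_bdd g veps v0 Δv hveps hv0 hΔv hunif hbd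
end
end
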